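/- arXiv:1811.03876 — 2 statements merged into one kernel-verified Lean document; each statement's English description precedes it below -/
import Mathlib

section
/- Given a 2-representation ρ of a Lie 2-algebra with crossed module (μ : 𝔤 → 𝔥, L) on a 2-vector space φ : W → V, the map ρ̄ : 𝔤 ⊕_L 𝔥 → gl(W ⊕ V) sending (x,y) to the block upper-triangular operator (w,v) ↦ (ρ₀¹(y+μ(x))w + ρ₁(x)v, ρ₀⁰(y)v) is a Lie algebra homomorphism, i.e. an honest representation of the semi-direct sum Lie algebra on W ⊕ V. -/
attribute [local instance 100] LieRing.ofAssociativeRing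

/-- The block upper-triangular operator ρ̄_{(x,y)}(w,v) =
(ρ₀¹(y+μx)w + ρ₁(x)v, ρ₀⁰(y)v). -/
def rhoBar
    (K : Type*) [Field K]
    (g h W V : Type*) [LieRing g] [LieAlgebra K g] [LieRing h] [LieAlgebra K h]
    [AddCommGroup W] [Module K W] [AddCommGroup V] [Module K V]
    (μ : g →ₗ⁅K⁆ h)
    (ρ01 : h →ₗ⁅K⁆ Module.End K W) (ρ00 : h →ₗ⁅K⁆ Module.End K V)
    (ρ1 : g →ₗ[K] V →ₗ[K] W) (x : g) (y : h) (p : W × V) : W × V :=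
  (ρ01 (y + μ x) p.1 + ρ1 x p.2, ρ00 y p.2)

/-!
The diagonal blocks of ρ̄ are ρ₀¹ and ρ₀⁰ composed with Lie algebra maps: ρ₀⁰ with the
projection `(x, y) ↦ y`, and ρ₀¹ with `(x, y) ↦ y + μ x`, which is a Lie algebra map
𝔤 ⊕_L 𝔥 → 𝔥 by equivariance of μ. The off-diagonal block ρ₁ then satisfies the required
derivation identity by the bracket axiom for ρ₁, the compatibility of ρ₁ with the action,
and `ρ₀¹ ∘ μ = ρ₁(·) ∘ φ`.
-/

section SemidirectSum

variable {K g h W V : Type*} [CommRing K] [LieRing g] [LieAlgebra K g] [LieRing h]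
  [LieAlgebra K h] [AddCommGroup W] [Module K W] [AddCommGroup V] [Module K V]
  (μ : g →ₗ⁅K⁆ h) (L : h →ₗ⁅K⁆ Module.End K g)

theorem lie_add_map_semidirect_bracket (hequiv : ∀ (y : h) (x : g), μ (L y x) = ⁅y, μ x⁆)
    (x₀ x₁ : g) (y₀ y₁ : h) :
    ⁅y₀, y₁⁆ + μ (⁅x₀, x₁⁆ + L y₀ x₁ - L y₁ x₀) = ⁅y₀ + μ x₀, y₁ + μ x₁⁆ := by
  rw [map_sub, map_add, LieHom.map_lie, hequiv, hequiv, lie_add, add_lie, add_lie,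
    ← lie_skew y₁ (μ x₀)]
  abel

variable {φ : W →ₗ[K] V} {ρ01 : h →ₗ⁅K⁆ Module.End K W} {ρ00 : h →ₗ⁅K⁆ Module.End K V}
  {ρ1 : g →ₗ[K] V →ₗ[K] W}

theorem map_semidirect_bracket_apply
    (hρ1br : ∀ x₀ x₁ : g,
      ρ1 ⁅x₀, x₁⁆ = ρ1 x₀ ∘ₗ (φ ∘ₗ ρ1 x₁) - ρ1 x₁ ∘ₗ (φ ∘ₗ ρ1 x₀))
    (h01μ : ∀ x : g, (ρ01 (μ x) : W →ₗ[K] W) = ρ1 x ∘ₗ φ)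
    (hact : ∀ (y : h) (x : g), ρ1 (L y x) = ρ01 y ∘ₗ ρ1 x - ρ1 x ∘ₗ ρ00 y)
    (x₀ x₁ : g) (y₀ y₁ : h) (v : V) :
    ρ1 (⁅x₀, x₁⁆ + L y₀ x₁ - L y₁ x₀) v =
      (ρ01 (y₀ + μ x₀) (ρ1 x₁ v) + ρ1 x₀ (ρ00 y₁ v)) -
        (ρ01 (y₁ + μ x₁) (ρ1 x₀ v) + ρ1 x₁ (ρ00 y₀ v)) := by
  simp only [map_add, map_sub, LinearMap.add_apply, LinearMap.sub_apply, hρ1br, hact, h01μ,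
    LinearMap.comp_apply]
  abel

end SemidirectSum

theorem rhoBar_isRepresentation_general
    (K : Type*) [Field K]
    (g h W V : Type*) [LieRing g] [LieAlgebra K g] [LieRing h] [LieAlgebra K h]
    [AddCommGroup W] [Module K W] [AddCommGroup V] [Module K V]
    (φ : W →ₗ[K] V)
    (μ : g →ₗ⁅K⁆ h) (L : h →ₗ⁅K⁆ Module.End K g)
    (hequiv : ∀ (y : h) (x : g), μ (L y x) = ⁅y, μ x⁆)
    (ρ01 : h →ₗ⁅K⁆ Module.End K W) (ρ00 : h →ₗ⁅K⁆ Module.End K V)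
    (ρ1 : g →ₗ[K] V →ₗ[K] W)
    (hρ1br : ∀ x₀ x₁ : g,
      ρ1 ⁅x₀, x₁⁆ = ρ1 x₀ ∘ₗ (φ ∘ₗ ρ1 x₁) - ρ1 x₁ ∘ₗ (φ ∘ₗ ρ1 x₀))
    (h01μ : ∀ x : g, (ρ01 (μ x) : W →ₗ[K] W) = ρ1 x ∘ₗ φ)
    (hact : ∀ (y : h) (x : g),
      ρ1 (L y x) = ρ01 y ∘ₗ ρ1 x - ρ1 x ∘ₗ ρ00 y) :
    ∀ (x₀ x₁ : g) (y₀ y₁ : h) (p : W × V),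
      rhoBar K g h W V μ ρ01 ρ00 ρ1
          (⁅x₀, x₁⁆ + L y₀ x₁ - L y₁ x₀) ⁅y₀, y₁⁆ p =
        rhoBar K g h W V μ ρ01 ρ00 ρ1 x₀ y₀
            (rhoBar K g h W V μ ρ01 ρ00 ρ1 x₁ y₁ p) -
          rhoBar K g h W V μ ρ01 ρ00 ρ1 x₁ y₁
            (rhoBar K g h W V μ ρ01 ρ00 ρ1 x₀ y₀ p) := by
  rintro x₀ x₁ y₀ y₁ ⟨w, v⟩
  ext
  · simp only [rhoBar, Prod.fst_sub, lie_add_map_semidirect_bracket μ L hequiv,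
      map_semidirect_bracket_apply μ L hρ1br h01μ hact, LieHom.map_lie, Ring.lie_def,
      LinearMap.sub_apply, Module.End.mul_apply, map_add]
    abel
  · simp only [rhoBar, Prod.snd_sub, LieHom.map_lie, Ring.lie_def, LinearMap.sub_apply,
      Module.End.mul_apply]

/-- Given a 2-representation of a Lie 2-algebra on a 2-vector space φ : W → V,
the map ρ̄ is an honest representation of the semi-direct sum 𝔤 ⊕_L 𝔥 on
W ⊕ V. -/
theorem rhoBar_isRepresentation
    (K : Type*) [Field K]
    (g h W V : Type*) [LieRing g] [LieAlgebra K g] [LieRing h] [LieAlgebra K h]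
    [AddCommGroup W] [Module K W] [AddCommGroup V] [Module K V]
    (φ : W →ₗ[K] V)
    (μ : g →ₗ⁅K⁆ h) (L : h →ₗ⁅K⁆ Module.End K g)
    (hder : ∀ (y : h) (x₁ x₂ : g), L y ⁅x₁, x₂⁆ = ⁅L y x₁, x₂⁆ + ⁅x₁, L y x₂⁆)
    (hequiv : ∀ (y : h) (x : g), μ (L y x) = ⁅y, μ x⁆)
    (hpeiffer : ∀ (x₀ x₁ : g), L (μ x₀) x₁ = ⁅x₀, x₁⁆)
    (ρ01 : h →ₗ⁅K⁆ Module.End K W) (ρ00 : h →ₗ⁅K⁆ Module.End K V)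
    (ρ1 : g →ₗ[K] V →ₗ[K] W)
    (hcompat : ∀ y : h, φ ∘ₗ ρ01 y = ρ00 y ∘ₗ φ)
    (hρ1br : ∀ x₀ x₁ : g,
      ρ1 ⁅x₀, x₁⁆ = ρ1 x₀ ∘ₗ (φ ∘ₗ ρ1 x₁) - ρ1 x₁ ∘ₗ (φ ∘ₗ ρ1 x₀))
    (h00μ : ∀ x : g, (ρ00 (μ x) : V →ₗ[K] V) = φ ∘ₗ ρ1 x)
    (h01μ : ∀ x : g, (ρ01 (μ x) : W →ₗ[K] W) = ρ1 x ∘ₗ φ)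
    (hact : ∀ (y : h) (x : g),
      ρ1 (L y x) = ρ01 y ∘ₗ ρ1 x - ρ1 x ∘ₗ ρ00 y) :
    ∀ (x₀ x₁ : g) (y₀ y₁ : h) (p : W × V),
      rhoBar K g h W V μ ρ01 ρ00 ρ1
          (⁅x₀, x₁⁆ + L y₀ x₁ - L y₁ x₀) ⁅y₀, y₁⁆ p =
        rhoBar K g h W V μ ρ01 ρ00 ρ1 x₀ y₀
            (rhoBar K g h W V μ ρ01 ρ00 ρ1 x₁ y₁ p) -
          rhoBar K g h W V μ ρ01 ρ00 ρ1 x₁ y₁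
            (rhoBar K g h W V μ ρ01 ρ00 ρ1 x₀ y₀ p) :=
  rhoBar_isRepresentation_general K g h W V φ μ L hequiv ρ01 ρ00 ρ1 hρ1br h01μ hact
end

section
/- The adjoint maps of a crossed module of Lie algebras (μ : 𝔤 → 𝔥, L), given by ad₁ : 𝔤 → Hom(𝔥, 𝔤), ad₁(x)(u) := −L_u x; ad₀¹ : 𝔥 → gl(𝔤), ad₀¹(y)(v) := L_y v; and ad₀⁰ : 𝔥 → gl(𝔥), ad₀⁰(y)(u) := [y,u], constitute a 2-representation of the Lie 2-algebra on the 2-vector space μ : 𝔤 → 𝔥 (forgetting the brackets). -/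
attribute [local instance 100] LieRing.ofAssociativeRing

/-!
The Peiffer identity `L_{μ x₀} x₁ = ⁅x₀, x₁⁆` turns every `L_{μ(·)}` into an inner bracket
of `𝔤`; after that, the conditions involving `ρ₁ x = -L_(·) x` are skew-symmetry of the
brackets, the derivation property of `L_u`, equivariance of `μ`, and `L_{⁅y, u⁆} = ⁅L_y, L_u⁆`.
-/

section

variable {R h M : Type*} [CommRing R] [LieRing h] [LieAlgebra R h] [AddCommGroup M] [Module R M]

theorem LieHom.map_lie_apply (L : h →ₗ⁅R⁆ Module.End R M) (y₀ y₁ : h) (v : M) :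
    L ⁅y₀, y₁⁆ v = L y₀ (L y₁ v) - L y₁ (L y₀ v) := by
  rw [L.map_lie, Ring.lie_def]
  rfl

theorem LieHom.neg_apply_apply_eq (L : h →ₗ⁅R⁆ Module.End R M) (y : h) (x : M) (u : h) :
    -(L u (L y x)) = L y (-(L u x)) - -(L ⁅y, u⁆ x) := by
  rw [L.map_lie_apply, map_neg]
  abel

end

namespace LieCrossedModule

variable {R g h : Type*} [CommRing R] [LieRing g] [LieAlgebra R g] [LieRing h] [LieAlgebra R h]
  {μ : g →ₗ⁅R⁆ h} {L : h →ₗ⁅R⁆ Module.End R g}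

theorem lie_map_eq_map_neg_apply (hequiv : ∀ (y : h) (x : g), μ (L y x) = ⁅y, μ x⁆)
    (x : g) (u : h) : ⁅μ x, u⁆ = μ (-(L u x)) := by
  rw [map_neg, hequiv, lie_skew]

theorem apply_map_eq_neg_apply_map (hpeiffer : ∀ (x₀ x₁ : g), L (μ x₀) x₁ = ⁅x₀, x₁⁆)
    (x v : g) : L (μ x) v = -(L (μ v) x) := by
  rw [hpeiffer, hpeiffer, lie_skew]

theorem neg_apply_lie
    (hder : ∀ (y : h) (x₁ x₂ : g), L y ⁅x₁, x₂⁆ = ⁅L y x₁, x₂⁆ + ⁅x₁, L y x₂⁆)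
    (hpeiffer : ∀ (x₀ x₁ : g), L (μ x₀) x₁ = ⁅x₀, x₁⁆) (x₀ x₁ : g) (u : h) :
    -(L u ⁅x₀, x₁⁆) = -(L (μ (-(L u x₁))) x₀) + L (μ (-(L u x₀))) x₁ := by
  rw [hder, hpeiffer, hpeiffer, neg_lie, neg_lie, ← lie_skew x₀]
  abel

end LieCrossedModule

/-- The adjoint maps ad₁(x)(u) = −L_u x, ad₀¹(y) = L_y, ad₀⁰(y) = ⁅y,·⁆ of a
crossed module of Lie algebras constitute a 2-representation on the 2-vector
space μ : 𝔤 → 𝔥. -/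
theorem adjoint_is_two_representation
    (K : Type*) [Field K]
    (g h : Type*) [LieRing g] [LieAlgebra K g] [LieRing h] [LieAlgebra K h]
    (μ : g →ₗ⁅K⁆ h) (L : h →ₗ⁅K⁆ Module.End K g)
    (hder : ∀ (y : h) (x₁ x₂ : g), L y ⁅x₁, x₂⁆ = ⁅L y x₁, x₂⁆ + ⁅x₁, L y x₂⁆)
    (hequiv : ∀ (y : h) (x : g), μ (L y x) = ⁅y, μ x⁆)
    (hpeiffer : ∀ (x₀ x₁ : g), L (μ x₀) x₁ = ⁅x₀, x₁⁆) :
    -- ρ₀¹ = L is a Lie algebra homomorphism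
    (∀ (y₀ y₁ : h) (v : g),
      L ⁅y₀, y₁⁆ v = L y₀ (L y₁ v) - L y₁ (L y₀ v)) ∧
    -- ρ₀⁰ = ad is a Lie algebra homomorphism
    (∀ (y₀ y₁ : h) (u : h),
      ⁅(⁅y₀, y₁⁆ : h), u⁆ = ⁅y₀, ⁅y₁, u⁆⁆ - ⁅y₁, ⁅y₀, u⁆⁆) ∧
    -- φ ∘ ρ₀¹(y) = ρ₀⁰(y) ∘ φ, with φ = μ
    (∀ (y : h) (v : g), μ (L y v) = ⁅y, μ v⁆) ∧
    -- ρ₁(x) = (u ↦ −L_u x) is a Lie homomorphism for [A,B]_φ = AφB − BφA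
    (∀ (x₀ x₁ : g) (u : h),
      -(L u ⁅x₀, x₁⁆) = -(L (μ (-(L u x₁))) x₀) + L (μ (-(L u x₀))) x₁) ∧
    -- ρ₀⁰(μ(x)) = φ ∘ ρ₁(x)
    (∀ (x : g) (u : h), ⁅μ x, u⁆ = μ (-(L u x))) ∧
    -- ρ₀¹(μ(x)) = ρ₁(x) ∘ φ
    (∀ (x : g) (v : g), L (μ x) v = -(L (μ v) x)) ∧
    -- ρ₁(L_y x) = ρ₀¹(y)ρ₁(x) − ρ₁(x)ρ₀⁰(y)
    (∀ (y : h) (x : g) (u : h),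
      -(L u (L y x)) = L y (-(L u x)) - -(L ⁅y, u⁆ x)) :=
  ⟨L.map_lie_apply, fun _ _ _ => lie_lie _ _ _, hequiv,
    LieCrossedModule.neg_apply_lie hder hpeiffer,
    LieCrossedModule.lie_map_eq_map_neg_apply hequiv,
    LieCrossedModule.apply_map_eq_neg_apply_map hpeiffer,
    L.neg_apply_apply_eq⟩
end
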